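/- arXiv:1705.10102 — 3 statements merged into one kernel-verified Lean document; each statement's English description precedes it below -/
import Mathlib

section
/- Let A ∈ ℝ^{n×d} have rank r and thin SVD A = UΣVᵀ, let 1 ≤ k < d, fix integers 1 ≤ m ≤ q ≤ r, a diagonal matrix Σ̃ = diag(d₁,…,d_q,0,…,0) ∈ ℝ^{r×r} with d₁ ≥ … ≥ d_q > 0, and set Σ̃_⊥ = diag(0,…,0,1,…,1) ∈ ℝ^{r×r} (first q entries zero, last r−q entries one). Let X ∈ ℝ^{d×(d−k)} satisfy XᵀX = I_{d−k}. If W ∈ ℝ^{s×n} satisfies ‖Σ̃Uᵀ WᵀW UΣ̃ − Σ̃²‖₂ ≤ ε, then |tr(Xᵀ V Σ_m Uᵀ (WᵀW − I_n) U Σ_m Vᵀ X)| ≤ d_m⁻² ε ‖A_m X‖_F² ≤ d_m⁻² ε ‖AX‖_F². -/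
open Matrix BigOperators

noncomputable def frobNorm {m n : Type*} [Fintype m] [Fintype n]
    (A : Matrix m n ℝ) : ℝ := Real.sqrt (∑ i, ∑ j, (A i j) ^ 2)

noncomputable def specNorm {m n : ℕ} (A : Matrix (Fin m) (Fin n) ℝ) : ℝ :=
  ‖LinearMap.toContinuousLinearMap (Matrix.toEuclideanLin A)‖

noncomputable def truncDiag {r : ℕ} (σ : Fin r → ℝ) (m : ℕ) :
    Matrix (Fin r) (Fin r) ℝ :=
  Matrix.diagonal fun i => if (i : ℕ) < m then σ i else 0

noncomputable def samplingMatrix {n : ℕ} (p : Fin n → ℝ) (s : ℕ) (ω : Fin s → Fin n) :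
    Matrix (Fin s) (Fin n) ℝ :=
  fun i j => if j = ω i then 1 / Real.sqrt (s * p j) else 0

noncomputable def expec {n s : ℕ} (p : Fin n → ℝ) (f : (Fin s → Fin n) → ℝ) : ℝ :=
  ∑ ω : Fin s → Fin n, (∏ i, p (ω i)) * f ω

open Classical in
noncomputable def probOf {n s : ℕ} (p : Fin n → ℝ) (E : (Fin s → Fin n) → Prop) : ℝ :=
  ∑ ω : Fin s → Fin n, if E ω then (∏ i, p (ω i)) else 0

def firstCols {n r : ℕ} (U : Matrix (Fin n) (Fin r) ℝ) (k : ℕ) (h : k ≤ r) :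
    Matrix (Fin n) (Fin k) ℝ :=
  fun i j => U i (Fin.castLE h j)

noncomputable def ridgeDiag {r : ℕ} (σ : Fin r → ℝ) (lam : ℝ) :
    Matrix (Fin r) (Fin r) ℝ :=
  Matrix.diagonal fun i => σ i / Real.sqrt (σ i ^ 2 + lam)

/-!
Write `Σ_m = Σ̃ E` with `E = diag(d_i⁻¹ σ_i)` on the first `m` indices (possible because `d_i > 0`
there). Then, using `UᵀU = I`, the trace is `tr(Bᵀ N B)` with `B = E Vᵀ X` and
`N = Σ̃UᵀWᵀWUΣ̃ − Σ̃²`, so it is at most `‖N‖₂ ‖B‖_F² ≤ ε ‖B‖_F²`. As `d` is nonincreasing, `B` is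
`Σ_m Vᵀ X` with its rows scaled by at most `d_m⁻¹`, and `‖Σ_m Vᵀ X‖_F = ‖A_m X‖_F ≤ ‖A X‖_F`
because `U` has orthonormal columns.
-/

section Frobenius

variable {ι κ : Type*} [Fintype ι] [Fintype κ]

lemma frobNorm_sq (A : Matrix ι κ ℝ) : frobNorm A ^ 2 = ∑ i, ∑ j, A i j ^ 2 :=
  Real.sq_sqrt (by positivity)

lemma frobNorm_nonneg (A : Matrix ι κ ℝ) : 0 ≤ frobNorm A :=
  Real.sqrt_nonneg _

lemma frobNorm_sq_eq_sum_dotProduct (A : Matrix ι κ ℝ) :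
    frobNorm A ^ 2 = ∑ j, Aᵀ j ⬝ᵥ Aᵀ j := by
  rw [frobNorm_sq, Finset.sum_comm]
  simp [dotProduct, sq]

lemma frobNorm_eq_sqrt_trace (A : Matrix ι κ ℝ) : frobNorm A = √(trace (Aᵀ * A)) := by
  rw [← Real.sqrt_sq (frobNorm_nonneg A), frobNorm_sq_eq_sum_dotProduct]
  rfl

lemma frobNorm_mul_of_transpose_mul_self {μ : Type*} [Fintype μ] [DecidableEq κ]
    {U : Matrix ι κ ℝ} (hU : Uᵀ * U = 1) (B : Matrix κ μ ℝ) :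
    frobNorm (U * B) = frobNorm B := by
  rw [frobNorm_eq_sqrt_trace, frobNorm_eq_sqrt_trace, transpose_mul, Matrix.mul_assoc,
    ← Matrix.mul_assoc Uᵀ, hU, Matrix.one_mul]

lemma frobNorm_diagonal_mul_le [DecidableEq ι] {a b : ι → ℝ} {c : ℝ} (hc : 0 ≤ c)
    (hab : ∀ i, |a i| ≤ c * |b i|) (M : Matrix ι κ ℝ) :
    frobNorm (diagonal a * M) ≤ c * frobNorm (diagonal b * M) := by
  rw [← sq_le_sq₀ (frobNorm_nonneg _) (mul_nonneg hc (frobNorm_nonneg _)), mul_pow,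
    frobNorm_sq, frobNorm_sq, Finset.mul_sum]
  refine Finset.sum_le_sum fun i _ => ?_
  rw [Finset.mul_sum]
  refine Finset.sum_le_sum fun j _ => ?_
  have hsq : a i ^ 2 ≤ c ^ 2 * b i ^ 2 := by
    rw [← sq_abs, ← sq_abs (b i), ← mul_pow]
    exact pow_le_pow_left₀ (abs_nonneg _) (hab i) 2
  rw [diagonal_mul, diagonal_mul, mul_pow, mul_pow, ← mul_assoc]
  gcongr

end Frobenius

lemma specNorm_nonneg {a b : ℕ} (A : Matrix (Fin a) (Fin b) ℝ) : 0 ≤ specNorm A :=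
  norm_nonneg _

lemma abs_dotProduct_mulVec_le {a : ℕ} (N : Matrix (Fin a) (Fin a) ℝ) (v : Fin a → ℝ) :
    |v ⬝ᵥ N *ᵥ v| ≤ specNorm N * (v ⬝ᵥ v) := by
  set x : EuclideanSpace ℝ (Fin a) := WithLp.toLp 2 v
  set T := LinearMap.toContinuousLinearMap (toEuclideanLin N)
  have hinner : v ⬝ᵥ N *ᵥ v = inner ℝ x (T x) := dotProduct_comm _ _
  have hnorm : v ⬝ᵥ v = ‖x‖ ^ 2 := by rw [← real_inner_self_eq_norm_sq]; rfl
  calc |v ⬝ᵥ N *ᵥ v| ≤ ‖x‖ * ‖T x‖ := hinner ▸ abs_real_inner_le_norm x (T x)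
    _ ≤ ‖x‖ * (‖T‖ * ‖x‖) := by gcongr; exact T.le_opNorm x
    _ = specNorm N * (v ⬝ᵥ v) := by rw [hnorm, specNorm]; ring

lemma abs_trace_transpose_mul_mul_le {a b : ℕ} (N : Matrix (Fin a) (Fin a) ℝ)
    (B : Matrix (Fin a) (Fin b) ℝ) :
    |trace (Bᵀ * N * B)| ≤ specNorm N * frobNorm B ^ 2 := by
  have htrace : trace (Bᵀ * N * B) = ∑ j, Bᵀ j ⬝ᵥ N *ᵥ Bᵀ j := by
    refine Finset.sum_congr rfl fun j _ => ?_
    simp only [diag, mul_apply, mulVec, dotProduct, transpose_apply, Finset.sum_mul,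
      Finset.mul_sum]
    rw [Finset.sum_comm]
    exact Finset.sum_congr rfl fun _ _ => Finset.sum_congr rfl fun _ _ => by ring
  rw [htrace, frobNorm_sq_eq_sum_dotProduct, Finset.mul_sum]
  exact (Finset.abs_sum_le_sum_abs _ _).trans
    (Finset.sum_le_sum fun j _ => abs_dotProduct_mulVec_le N _)

lemma diagonal_mul_diagonal_inv_mul {ι K : Type*} [Fintype ι] [DecidableEq ι] [DivisionRing K]
    {a b : ι → K} (h : ∀ i, a i = 0 → b i = 0) :
    diagonal a * diagonal (fun i => (a i)⁻¹ * b i) = diagonal b := by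
  rw [diagonal_mul_diagonal]
  congr 1
  funext i
  by_cases ha : a i = 0
  · simp [ha, h i ha]
  · rw [mul_inv_cancel_left₀ ha]

lemma sandwich_diagonal_mul_diagonal {n r d c s R : Type*} [Fintype n] [Fintype r] [Fintype d]
    [Fintype s] [DecidableEq n] [DecidableEq r] [CommRing R] {U : Matrix n r R} (hU : Uᵀ * U = 1)
    (W : Matrix s n R) (a e : r → R) (V : Matrix d r R) (X : Matrix d c R) :
    Xᵀ * V * (diagonal a * diagonal e) * Uᵀ * (Wᵀ * W - 1) * U * (diagonal a * diagonal e)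
        * Vᵀ * X = (diagonal e * (Vᵀ * X))ᵀ
          * (diagonal a * Uᵀ * Wᵀ * W * U * diagonal a - diagonal a * diagonal a)
          * (diagonal e * (Vᵀ * X)) := by
  have hU' : ∀ M : Matrix r c R, Uᵀ * (U * M) = M := fun M => by
    rw [← Matrix.mul_assoc, hU, Matrix.one_mul]
  have hcomm : diagonal a * diagonal e = diagonal e * diagonal a := by
    simp only [diagonal_mul_diagonal, mul_comm]
  nth_rw 1 [hcomm]
  simp only [transpose_mul, diagonal_transpose, transpose_transpose, Matrix.mul_sub,
    Matrix.sub_mul, Matrix.mul_one, Matrix.mul_assoc, hU']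

/-- bounding the term Δ₁. -/
theorem stmt_1 {n d s r : ℕ} {k m q : ℕ}
    (A : Matrix (Fin n) (Fin d) ℝ)
    (U : Matrix (Fin n) (Fin r) ℝ) (V : Matrix (Fin d) (Fin r) ℝ) (σ : Fin r → ℝ)
    (hU : Uᵀ * U = 1)
    (hA : A = U * Matrix.diagonal σ * Vᵀ)
    (hm1 : 1 ≤ m) (hmq : m ≤ q) (hqr : q ≤ r)
    (dd : Fin r → ℝ)
    (hdd_dec : ∀ i j : Fin r, i ≤ j → dd j ≤ dd i)
    (hdd_pos : ∀ i : Fin r, (i : ℕ) < q → 0 < dd i)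
    (X : Matrix (Fin d) (Fin (d - k)) ℝ)
    (ε : ℝ)
    (W : Matrix (Fin s) (Fin n) ℝ)
    (h1 : specNorm (Matrix.diagonal dd * Uᵀ * Wᵀ * W * U * Matrix.diagonal dd
        - Matrix.diagonal dd * Matrix.diagonal dd) ≤ ε) :
    |Matrix.trace (Xᵀ * V * truncDiag σ m * Uᵀ * (Wᵀ * W - 1) * U * truncDiag σ m * Vᵀ * X)|
        ≤ (dd ⟨m - 1, by omega⟩)⁻¹ ^ 2 * ε * frobNorm (U * truncDiag σ m * Vᵀ * X) ^ 2
      ∧ (dd ⟨m - 1, by omega⟩)⁻¹ ^ 2 * ε * frobNorm (U * truncDiag σ m * Vᵀ * X) ^ 2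
        ≤ (dd ⟨m - 1, by omega⟩)⁻¹ ^ 2 * ε * frobNorm (A * X) ^ 2 := by
  set t : Fin r → ℝ := fun i => if (i : ℕ) < m then σ i else 0
  set c := (dd ⟨m - 1, by omega⟩)⁻¹
  have hdd_pos' : ∀ i : Fin r, (i : ℕ) < m → 0 < dd i := fun i hi => hdd_pos i (by omega)
  have hdm : 0 < dd ⟨m - 1, by omega⟩ := hdd_pos' _ (show m - 1 < m by omega)
  have hε : 0 ≤ ε := (specNorm_nonneg _).trans h1
  have hfactor : truncDiag σ m = diagonal dd * diagonal (fun i => (dd i)⁻¹ * t i) :=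
    (diagonal_mul_diagonal_inv_mul fun i hi =>
      if_neg fun him => (hdd_pos' i him).ne' hi).symm
  set B := diagonal (fun i => (dd i)⁻¹ * t i) * (Vᵀ * X)
  have hB : frobNorm B ≤ c * frobNorm (U * truncDiag σ m * Vᵀ * X) := by
    rw [Matrix.mul_assoc, Matrix.mul_assoc, frobNorm_mul_of_transpose_mul_self hU]
    refine frobNorm_diagonal_mul_le (inv_nonneg.2 hdm.le) (fun i => ?_) _
    by_cases hi : (i : ℕ) < m
    · rw [abs_mul, abs_of_pos (inv_pos.2 (hdd_pos' i hi))]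
      gcongr
      exact hdd_dec _ _ (Fin.le_def.2 (show (i : ℕ) ≤ m - 1 by omega))
    · simp [t, hi]
  have hAX : frobNorm (U * truncDiag σ m * Vᵀ * X) ≤ frobNorm (A * X) := by
    simp only [hA, Matrix.mul_assoc, frobNorm_mul_of_transpose_mul_self hU]
    refine (frobNorm_diagonal_mul_le zero_le_one (fun i => ?_) _).trans_eq (one_mul _)
    by_cases hi : (i : ℕ) < m <;> simp [hi]
  constructor
  · calc _ = |trace (Bᵀ * (diagonal dd * Uᵀ * Wᵀ * W * U * diagonal dd
            - diagonal dd * diagonal dd) * B)| := by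
          rw [hfactor, sandwich_diagonal_mul_diagonal hU]
      _ ≤ ε * (c * frobNorm (U * truncDiag σ m * Vᵀ * X)) ^ 2 := by
          refine (abs_trace_transpose_mul_mul_le _ _).trans ?_
          gcongr
          exact frobNorm_nonneg B
      _ = _ := by ring
  · have := frobNorm_nonneg (U * truncDiag σ m * Vᵀ * X)
    gcongr
end

section
/- Let A ∈ ℝ^{m×n} and B ∈ ℝ^{n×m}, let p₁,…,p_n be strictly positive probabilities summing to one, and let W ∈ ℝ^{s×n} be the random sampling-and-rescaling matrix of Algorithm 1 built from these probabilities. Then E[(tr(A Wᵀ W B − A B))²] ≤ Σ_{i=1}^{n} ((B A)_{ii})² / (s p_i). -/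
open Matrix BigOperators

/-!
Writing `W` for the sampling matrix, `tr (A Wᵀ W B) = ∑ᵢ f (ω i)` with
`f k = (B A)ₖₖ / (s pₖ)`, and `E f = tr (A B) / s`. The error is thus a sum of `s` independent
centred copies of `f - E f`, whose second moment is `s Var f ≤ s E f² = ∑ₖ (B A)ₖₖ² / (s pₖ)`.
-/

section expec

variable {n s : ℕ} (p : Fin n → ℝ)

lemma expec_prod_apply (g : Fin s → Fin n → ℝ) :
    expec p (fun ω => ∏ i, g i (ω i)) = ∏ i, ∑ k, p k * g i k := by
  rw [Fintype.prod_sum]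
  exact Finset.sum_congr rfl fun ω _ => Finset.prod_mul_distrib.symm

lemma expec_sum {ι : Type*} (t : Finset ι) (f : ι → (Fin s → Fin n) → ℝ) :
    expec p (fun ω => ∑ i ∈ t, f i ω) = ∑ i ∈ t, expec p (f i) := by
  simp only [expec, Finset.mul_sum]
  exact Finset.sum_comm

variable {p}

lemma expec_mul_apply_apply (hsum : ∑ k, p k = 1) (g h : Fin n → ℝ) (i j : Fin s) :
    expec p (fun ω => g (ω i) * h (ω j)) =
      if i = j then ∑ k, p k * (g k * h k) else (∑ k, p k * g k) * ∑ k, p k * h k := by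
  split_ifs with hij
  · subst hij
    simpa [mul_ite, hsum] using expec_prod_apply p (fun t k => if t = i then g k * h k else 1)
  · have := expec_prod_apply p
      (fun t k => (if t = i then g k else 1) * (if t = j then h k else 1))
    rw [Finset.prod_eq_mul i j hij (fun t _ ht => by simp [ht.1, ht.2, hsum]) (by simp)
      (by simp)] at this
    simpa only [Finset.prod_mul_distrib, Finset.prod_ite_eq', Finset.mem_univ, if_true, if_neg hij,
      if_neg (Ne.symm hij), mul_one, one_mul] using this

lemma expec_sum_apply_sq_of_centered (hsum : ∑ k, p k = 1) {g : Fin n → ℝ}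
    (hg : ∑ k, p k * g k = 0) :
    expec p (fun ω : Fin s → Fin n => (∑ i, g (ω i)) ^ 2) = s * ∑ k, p k * g k ^ 2 := by
  simp_rw [sq, Finset.sum_mul_sum, expec_sum, expec_mul_apply_apply hsum, hg, mul_zero]
  simp

end expec

lemma sum_mul_sub_mean_sq {ι : Type*} (t : Finset ι) {p : ι → ℝ} (hsum : ∑ k ∈ t, p k = 1)
    (f : ι → ℝ) :
    ∑ k ∈ t, p k * (f k - ∑ l ∈ t, p l * f l) ^ 2 =
      ∑ k ∈ t, p k * f k ^ 2 - (∑ k ∈ t, p k * f k) ^ 2 := by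
  set μ := ∑ l ∈ t, p l * f l
  have hexpand : ∀ k, p k * (f k - μ) ^ 2 = p k * f k ^ 2 - 2 * μ * (p k * f k) + μ ^ 2 * p k :=
    fun k => by ring
  simp_rw [hexpand, Finset.sum_add_distrib, Finset.sum_sub_distrib, ← Finset.mul_sum, hsum]
  ring

lemma sum_mul_sub_mean {ι : Type*} (t : Finset ι) {p : ι → ℝ} (hsum : ∑ k ∈ t, p k = 1)
    (f : ι → ℝ) : ∑ k ∈ t, p k * (f k - ∑ l ∈ t, p l * f l) = 0 := by
  simp_rw [mul_sub, Finset.sum_sub_distrib, ← Finset.sum_mul, hsum, one_mul, sub_self]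

section samplingMatrix

variable {n s : ℕ} {p : Fin n → ℝ}

lemma samplingMatrix_mul_mul_transpose_apply_self (hp : ∀ k, 0 ≤ p k) (ω : Fin s → Fin n)
    (M : Matrix (Fin n) (Fin n) ℝ) (i : Fin s) :
    (samplingMatrix p s ω * M * (samplingMatrix p s ω)ᵀ) i i = M (ω i) (ω i) / (s * p (ω i)) := by
  have hsq : (1 / √(s * p (ω i))) * (1 / √(s * p (ω i))) = 1 / (s * p (ω i)) := by
    rw [one_div_mul_one_div, Real.mul_self_sqrt (by have := hp (ω i); positivity)]
  simp only [mul_apply, transpose_apply, samplingMatrix, ite_mul, mul_ite, zero_mul, mul_zero,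
    Finset.sum_ite_eq', Finset.mem_univ, if_true]
  rw [mul_right_comm, hsq, one_div_mul_eq_div]

lemma trace_mul_samplingMatrix_transpose_mul (hp : ∀ k, 0 ≤ p k) (ω : Fin s → Fin n)
    {m : ℕ} (A : Matrix (Fin m) (Fin n) ℝ) (B : Matrix (Fin n) (Fin m) ℝ) :
    trace (A * (samplingMatrix p s ω)ᵀ * samplingMatrix p s ω * B) =
      ∑ i, (B * A) (ω i) (ω i) / (s * p (ω i)) := by
  rw [Matrix.mul_assoc, trace_mul_comm, Matrix.mul_assoc, ← Matrix.mul_assoc B,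
    ← Matrix.mul_assoc]
  exact Finset.sum_congr rfl fun i _ => samplingMatrix_mul_mul_transpose_apply_self hp ω _ i

end samplingMatrix

/-- expected squared trace error of sampled matrix multiplication. -/
theorem stmt_6 {m n : ℕ} (s : ℕ) (hs : 0 < s)
    (A : Matrix (Fin m) (Fin n) ℝ) (B : Matrix (Fin n) (Fin m) ℝ)
    (p : Fin n → ℝ) (hp : ∀ i, 0 < p i) (hsum : ∑ i, p i = 1) :
    expec p (fun (ω : Fin s → Fin n) =>
      (Matrix.trace (A * (samplingMatrix p s ω)ᵀ * samplingMatrix p s ω * B - A * B)) ^ 2)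
    ≤ ∑ i, ((B * A) i i) ^ 2 / (s * p i) := by
  have hs' : (s : ℝ) ≠ 0 := Nat.cast_ne_zero.2 hs.ne'
  set f : Fin n → ℝ := fun k => (B * A) k k / (s * p k)
  set μ := ∑ k, p k * f k
  have hmean : trace (A * B) = s * μ := by
    rw [trace_mul_comm, trace, Finset.mul_sum]
    exact Finset.sum_congr rfl fun k _ => by simp only [diag_apply, f]; field_simp [(hp k).ne']
  have herror : ∀ ω : Fin s → Fin n,
      trace (A * (samplingMatrix p s ω)ᵀ * samplingMatrix p s ω * B - A * B) =
        ∑ i, (f (ω i) - μ) := fun ω => by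
    rw [trace_sub, trace_mul_samplingMatrix_transpose_mul (fun k => (hp k).le), hmean,
      Finset.sum_sub_distrib]
    simp only [Finset.sum_const, Finset.card_univ, Fintype.card_fin, nsmul_eq_mul, f]
  simp_rw [herror]
  rw [expec_sum_apply_sq_of_centered hsum (sum_mul_sub_mean _ hsum f),
    sum_mul_sub_mean_sq _ hsum f]
  calc (s : ℝ) * (∑ k, p k * f k ^ 2 - μ ^ 2) ≤ s * ∑ k, p k * f k ^ 2 := by
        gcongr; exact sub_le_self _ (sq_nonneg μ)
    _ = ∑ k, (B * A) k k ^ 2 / (s * p k) := by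
        rw [Finset.mul_sum]
        exact Finset.sum_congr rfl fun k _ => by simp only [f]; field_simp [(hp k).ne']
end

section
/- Let A ∈ ℝ^{n×d} have rank r with singular values σ₁ ≥ … ≥ σ_r > 0, let 1 ≤ k < r, set λ = ‖A_{k,⊥}‖_F²/k, and let 1 ≤ m ≤ r satisfy σ_m² ≥ λ ≥ σ_{m+1}² (with the convention σ_{r+1} = 0). Then ‖A_{m,⊥}‖_F² ≤ 2‖A_{k,⊥}‖_F², where A_{m,⊥} = A − A_m; consequently ‖A_{m,⊥}‖_F² ≤ 2‖AX‖_F² for every X ∈ ℝ^{d×(d−k)} with XᵀX = I_{d−k}. -/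
open Matrix BigOperators

lemma frob_sq {m n : Type*} [Fintype m] [Fintype n] (A : Matrix m n ℝ) :
    frobNorm A ^ 2 = ∑ i, ∑ j, (A i j) ^ 2 := by
  rw [frobNorm, Real.sq_sqrt]
  exact Finset.sum_nonneg fun i _ => Finset.sum_nonneg fun j _ => sq_nonneg _

lemma frob_sq_trace {m n : Type*} [Fintype m] [Fintype n] (A : Matrix m n ℝ) :
    frobNorm A ^ 2 = (Aᵀ * A).trace := by
  rw [frob_sq, Matrix.trace, Finset.sum_comm]
  simp [Matrix.mul_apply, Matrix.diag, sq]

lemma ata {n d r : ℕ} (U : Matrix (Fin n) (Fin r) ℝ) (V : Matrix (Fin d) (Fin r) ℝ)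
    (hU : Uᵀ * U = 1) (σ : Fin r → ℝ) :
    (U * Matrix.diagonal σ * Vᵀ)ᵀ * (U * Matrix.diagonal σ * Vᵀ)
      = V * Matrix.diagonal (fun i => σ i ^ 2) * Vᵀ := by
  simp only [Matrix.transpose_mul, Matrix.transpose_transpose,
    Matrix.diagonal_transpose, Matrix.mul_assoc]
  rw [← Matrix.mul_assoc Uᵀ U, hU, Matrix.one_mul,
    ← Matrix.mul_assoc (Matrix.diagonal σ), Matrix.diagonal_mul_diagonal]
  simp [sq]

section part2
variable {n d r s : ℕ} (U : Matrix (Fin n) (Fin r) ℝ) (V : Matrix (Fin d) (Fin r) ℝ)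
  (X : Matrix (Fin d) (Fin s) ℝ)

lemma frob_AX (hU : Uᵀ * U = 1) (σ : Fin r → ℝ) :
    frobNorm (U * Matrix.diagonal σ * Vᵀ * X) ^ 2
      = ∑ i, σ i ^ 2 * (∑ j, (Vᵀ * X) i j ^ 2) := by
  rw [frob_sq_trace]
  set W := Vᵀ * X with hW
  have h1 : (U * Matrix.diagonal σ * Vᵀ * X)ᵀ * (U * Matrix.diagonal σ * Vᵀ * X)
      = Wᵀ * (Matrix.diagonal (fun i => σ i ^ 2) * W) := by
    have h := ata U V hU σ
    calc (U * Matrix.diagonal σ * Vᵀ * X)ᵀ * (U * Matrix.diagonal σ * Vᵀ * X)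
        = Xᵀ * ((U * Matrix.diagonal σ * Vᵀ)ᵀ * (U * Matrix.diagonal σ * Vᵀ)) * X := by
          simp only [Matrix.transpose_mul, Matrix.mul_assoc]
      _ = Xᵀ * (V * Matrix.diagonal (fun i => σ i ^ 2) * Vᵀ) * X := by rw [h]
      _ = Wᵀ * (Matrix.diagonal (fun i => σ i ^ 2) * W) := by
          rw [hW]
          simp only [Matrix.transpose_mul, Matrix.transpose_transpose, Matrix.mul_assoc]
  rw [h1, Matrix.trace]
  simp only [Matrix.diag_apply, Matrix.mul_apply, Matrix.diagonal_mul,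
    Matrix.transpose_apply]
  rw [Finset.sum_comm]
  apply Finset.sum_congr rfl
  intro i _
  rw [Finset.mul_sum]
  apply Finset.sum_congr rfl
  intro j _
  simp [Matrix.diagonal_apply, ite_mul, Finset.sum_ite_eq]
  ring

lemma t_le_one (hV : Vᵀ * V = 1) (hX : Xᵀ * X = 1) (i : Fin r) :
    (∑ j, (Vᵀ * X) i j ^ 2) ≤ 1 := by
  set M := (1 - X * Xᵀ) * V with hM
  have hMM : Mᵀ * M = 1 - (Vᵀ * X) * (Vᵀ * X)ᵀ := by
    have hQ : (X * Xᵀ) * (X * Xᵀ) = X * Xᵀ := by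
      calc (X * Xᵀ) * (X * Xᵀ) = X * (Xᵀ * X) * Xᵀ := by
            simp only [Matrix.mul_assoc]
        _ = X * Xᵀ := by rw [hX, Matrix.mul_one]
    have hsym : (1 - X * Xᵀ)ᵀ = 1 - X * Xᵀ := by
      simp [Matrix.transpose_sub, Matrix.transpose_mul]
    have htr : (Vᵀ * X) * (Vᵀ * X)ᵀ = Vᵀ * ((X * Xᵀ) * V) := by
      simp only [Matrix.transpose_mul, Matrix.transpose_transpose, Matrix.mul_assoc]
    calc Mᵀ * M = Vᵀ * ((1 - X * Xᵀ) * ((1 - X * Xᵀ) * V)) := by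
          rw [hM, Matrix.transpose_mul, hsym, Matrix.mul_assoc]
      _ = Vᵀ * (((1 - X * Xᵀ) * (1 - X * Xᵀ)) * V) := by rw [Matrix.mul_assoc]
      _ = Vᵀ * ((1 - X * Xᵀ) * V) := by
          have hQQ : (1 - X * Xᵀ) * (1 - X * Xᵀ) = 1 - X * Xᵀ := by
            simp only [Matrix.sub_mul, Matrix.mul_sub, Matrix.one_mul,
              Matrix.mul_one, hQ]
            abel
          rw [hQQ]
      _ = 1 - (Vᵀ * X) * (Vᵀ * X)ᵀ := by
          rw [Matrix.sub_mul, Matrix.one_mul, Matrix.mul_sub, hV, htr]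
  have hnn : 0 ≤ (Mᵀ * M) i i := by
    rw [Matrix.mul_apply]
    exact Finset.sum_nonneg fun a _ => by
      simp only [Matrix.transpose_apply]; exact mul_self_nonneg _
  rw [hMM] at hnn
  have he : ((Vᵀ * X) * (Vᵀ * X)ᵀ) i i = ∑ j, (Vᵀ * X) i j ^ 2 := by
    simp [Matrix.mul_apply, sq, mul_comm]
  simp only [Matrix.sub_apply, Matrix.one_apply_eq, he] at hnn
  linarith
end part2

lemma t_sum_ge {d r s : ℕ} (V : Matrix (Fin d) (Fin r) ℝ) (X : Matrix (Fin d) (Fin s) ℝ)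
    (hV : Vᵀ * V = 1) (hX : Xᵀ * X = 1) :
    (r : ℝ) + (s : ℝ) - (d : ℝ) ≤ ∑ i, ∑ j, (Vᵀ * X) i j ^ 2 := by
  set P := V * Vᵀ with hP
  set Q := X * Xᵀ with hQ
  have hP2 : (1 - P) * (1 - P) = 1 - P := by
    have : P * P = P := by
      rw [hP, Matrix.mul_assoc, ← Matrix.mul_assoc Vᵀ V, hV, Matrix.one_mul]
    simp only [Matrix.sub_mul, Matrix.mul_sub, Matrix.one_mul, Matrix.mul_one, this]
    abel
  have hQ2 : (1 - Q) * (1 - Q) = 1 - Q := by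
    have : Q * Q = Q := by
      rw [hQ, Matrix.mul_assoc, ← Matrix.mul_assoc Xᵀ X, hX, Matrix.one_mul]
    simp only [Matrix.sub_mul, Matrix.mul_sub, Matrix.one_mul, Matrix.mul_one, this]
    abel
  set N := (1 - P) * (1 - Q) with hN
  have h0 : 0 ≤ (Nᵀ * N).trace := by
    rw [← frob_sq_trace]; positivity
  have hNt : Nᵀ = (1 - Q) * (1 - P) := by
    rw [hN]
    simp [Matrix.transpose_sub, Matrix.transpose_mul, hP, hQ]
  have htr : (Nᵀ * N).trace = ((1 - P) * (1 - Q)).trace := by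
    rw [hNt, hN]
    calc ((1 - Q) * (1 - P) * ((1 - P) * (1 - Q))).trace
        = ((1 - Q) * (((1 - P) * (1 - P)) * (1 - Q))).trace := by
          simp only [Matrix.mul_assoc]
      _ = ((1 - Q) * ((1 - P) * (1 - Q))).trace := by rw [hP2]
      _ = ((1 - P) * (1 - Q) * (1 - Q)).trace := by rw [Matrix.trace_mul_comm]
      _ = ((1 - P) * ((1 - Q) * (1 - Q))).trace := by rw [Matrix.mul_assoc]
      _ = ((1 - P) * (1 - Q)).trace := by rw [hQ2]
  have hPQ : (P * Q).trace = ∑ i, ∑ j, (Vᵀ * X) i j ^ 2 := by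
    have e1 : P * Q = V * (Vᵀ * X * Xᵀ) := by
      rw [hP, hQ]; simp only [Matrix.mul_assoc]
    have e2 : (Vᵀ * X * Xᵀ) * V = (Vᵀ * X) * (Vᵀ * X)ᵀ := by
      simp only [Matrix.transpose_mul, Matrix.transpose_transpose, Matrix.mul_assoc]
    rw [e1, Matrix.trace_mul_comm, e2, Matrix.trace]
    simp [Matrix.mul_apply, sq, mul_comm]
  have hexp : ((1 - P) * (1 - Q)).trace
      = (d : ℝ) - (s : ℝ) - (r : ℝ) + (P * Q).trace := by
    have : (1 - P) * (1 - Q) = 1 - Q - P + P * Q := by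
      simp only [Matrix.sub_mul, Matrix.mul_sub, Matrix.one_mul, Matrix.mul_one]
      abel
    rw [this, Matrix.trace_add, Matrix.trace_sub, Matrix.trace_sub, Matrix.trace_one]
    have htQ : Q.trace = (s : ℝ) := by
      rw [hQ, Matrix.trace_mul_comm, hX, Matrix.trace_one]
      simp
    have htP : P.trace = (r : ℝ) := by
      rw [hP, Matrix.trace_mul_comm, hV, Matrix.trace_one]
      simp
    rw [htQ, htP]
    simp only [Fintype.card_fin]

  rw [htr, hexp, hPQ] at h0
  linarith


lemma part1_sum {r k m : ℕ} (σ : Fin r → ℝ) (hσdec : ∀ i j : Fin r, i ≤ j → σ j ≤ σ i)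
    (hσpos : ∀ i, 0 < σ i) (hk1 : 1 ≤ k) (hkr : k < r) (hm1 : 1 ≤ m) (hmr : m ≤ r)
    (lam : ℝ) (hlam : lam = (∑ i with ¬ (i : Fin r).1 < k, σ i ^ 2) / k)
    (hσm1 : ∀ h : m < r, σ ⟨m, h⟩ ^ 2 ≤ lam) :
    (∑ i with ¬ (i : Fin r).1 < m, σ i ^ 2) ≤ 2 * ∑ i with ¬ (i : Fin r).1 < k, σ i ^ 2 := by
  set Sk := ∑ i with ¬ (i : Fin r).1 < k, σ i ^ 2 with hSk
  have hSknn : 0 ≤ Sk := Finset.sum_nonneg fun i _ => sq_nonneg _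
  rcases le_or_gt k m with hkm | hmk
  · have : (∑ i with ¬ (i : Fin r).1 < m, σ i ^ 2) ≤ Sk := by
      apply Finset.sum_le_sum_of_subset_of_nonneg
      · intro i hi
        simp only [Finset.mem_filter, Finset.mem_univ, true_and] at *
        omega
      · intro i _ _; exact sq_nonneg _
    linarith
  · have hmr' : m < r := lt_of_lt_of_le hmk hkr.le
    have hσmlam : σ ⟨m, hmr'⟩ ^ 2 ≤ lam := hσm1 hmr'
    have hlamnn : 0 ≤ lam := by
      rw [hlam]; positivity
    have hsplit : (∑ i with ¬ (i : Fin r).1 < m, σ i ^ 2)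
        = (∑ i with (m ≤ (i : Fin r).1 ∧ (i : Fin r).1 < k), σ i ^ 2) + Sk := by
      rw [hSk, ← Finset.sum_filter_add_sum_filter_not
        (Finset.filter (fun i : Fin r => ¬ (i : ℕ) < m) Finset.univ)
        (fun i => (i : ℕ) < k)]
      congr 1 <;> · congr 1; ext i; simp; try omega
    have hbound : (∑ i with (m ≤ (i : Fin r).1 ∧ (i : Fin r).1 < k), σ i ^ 2)
        ≤ ((k - m : ℕ) : ℝ) * lam := by
      have h := Finset.sum_le_card_nsmul
        (Finset.filter (fun i : Fin r => m ≤ (i : ℕ) ∧ (i : ℕ) < k) Finset.univ)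
        (fun i => σ i ^ 2) lam ?_
      · have hcard : (Finset.filter (fun i : Fin r => m ≤ (i : ℕ) ∧ (i : ℕ) < k)
            Finset.univ).card = k - m := by
          rw [Finset.card_filter,
            Fin.sum_univ_eq_sum_range (fun i => if m ≤ i ∧ i < k then 1 else 0),
            ← Finset.card_filter,
            show (Finset.range r).filter (fun i => m ≤ i ∧ i < k) = Finset.Ico m k by
              ext i; simp; omega,
            Nat.card_Ico]
        rw [hcard] at h
        simpa [nsmul_eq_mul] using h
      · intro i hi
        simp only [Finset.mem_filter, Finset.mem_univ, true_and] at hi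
        calc σ i ^ 2 ≤ σ ⟨m, hmr'⟩ ^ 2 := by
              have h1 : σ i ≤ σ ⟨m, hmr'⟩ := hσdec ⟨m, hmr'⟩ i (by
                simp only [Fin.mk_le_mk, Fin.le_def]; exact hi.1)
              exact pow_le_pow_left₀ (hσpos i).le h1 2
          _ ≤ lam := hσmlam
    have hkm' : ((k - m : ℕ) : ℝ) * lam ≤ (k : ℝ) * lam := by
      apply mul_le_mul_of_nonneg_right _ hlamnn
      exact_mod_cast Nat.sub_le k m
    have hkl : (k : ℝ) * lam = Sk := by
      rw [hlam]; field_simp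
    linarith

lemma usv_frob {n d r : ℕ} (U : Matrix (Fin n) (Fin r) ℝ) (V : Matrix (Fin d) (Fin r) ℝ)
    (hU : Uᵀ * U = 1) (hV : Vᵀ * V = 1) (D : Fin r → ℝ) :
    frobNorm (U * Matrix.diagonal D * Vᵀ) ^ 2 = ∑ i, D i ^ 2 := by
  rw [frob_sq_trace]
  have : (U * Matrix.diagonal D * Vᵀ)ᵀ * (U * Matrix.diagonal D * Vᵀ)
      = V * Matrix.diagonal (fun i => D i * D i) * Vᵀ := by
    simp only [Matrix.transpose_mul, Matrix.transpose_transpose,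
      Matrix.diagonal_transpose, Matrix.mul_assoc]
    rw [← Matrix.mul_assoc Uᵀ U, hU, Matrix.one_mul,
      ← Matrix.mul_assoc (Matrix.diagonal D), Matrix.diagonal_mul_diagonal]
  rw [this, Matrix.trace_mul_comm, ← Matrix.mul_assoc, hV, Matrix.one_mul,
    Matrix.trace_diagonal]
  simp [sq]

lemma final_sum {r k : ℕ} (hkr : k < r) (σ t : Fin r → ℝ)
    (hσdec : ∀ i j : Fin r, i ≤ j → σ j ≤ σ i) (hσpos : ∀ i, 0 < σ i)
    (ht0 : ∀ i, 0 ≤ t i) (ht1 : ∀ i, t i ≤ 1)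
    (hts : (r : ℝ) - k ≤ ∑ i, t i) :
    (∑ i with ¬ (i : Fin r).1 < k, σ i ^ 2) ≤ ∑ i, σ i ^ 2 * t i := by
  set c := σ ⟨k, hkr⟩ ^ 2 with hc
  have hcnn : 0 ≤ c := sq_nonneg _
  have hcard : (Finset.filter (fun i : Fin r => ¬ (i : ℕ) < k) Finset.univ).card = r - k := by
    rw [Finset.card_filter,
      Fin.sum_univ_eq_sum_range (fun i => if ¬ i < k then 1 else 0),
      ← Finset.card_filter,
      show (Finset.range r).filter (fun i => ¬ i < k) = Finset.Ico k r by
        ext i; simp; omega,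
      Nat.card_Ico]
  have hsplitσ : (∑ i, σ i ^ 2 * t i)
      = (∑ i with (i : Fin r).1 < k, σ i ^ 2 * t i)
        + (∑ i with ¬ (i : Fin r).1 < k, σ i ^ 2 * t i) :=
    (Finset.sum_filter_add_sum_filter_not _ _ _).symm
  have hsplitt : (∑ i, t i)
      = (∑ i with (i : Fin r).1 < k, t i) + (∑ i with ¬ (i : Fin r).1 < k, t i) :=
    (Finset.sum_filter_add_sum_filter_not _ _ _).symm
  have h1 : (∑ i with (i : Fin r).1 < k, c * t i)
      ≤ ∑ i with (i : Fin r).1 < k, σ i ^ 2 * t i := by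
    apply Finset.sum_le_sum
    intro i hi
    simp only [Finset.mem_filter, Finset.mem_univ, true_and] at hi
    apply mul_le_mul_of_nonneg_right _ (ht0 i)
    exact pow_le_pow_left₀ (hσpos _).le
      (hσdec i ⟨k, hkr⟩ (by simp [Fin.le_def]; omega)) 2
  have h2 : (∑ i with ¬ (i : Fin r).1 < k, (σ i ^ 2 + c * (t i - 1)))
      ≤ ∑ i with ¬ (i : Fin r).1 < k, σ i ^ 2 * t i := by
    apply Finset.sum_le_sum
    intro i hi
    simp only [Finset.mem_filter, Finset.mem_univ, true_and] at hi
    have hσi : σ i ^ 2 ≤ c :=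
      pow_le_pow_left₀ (hσpos _).le
        (hσdec ⟨k, hkr⟩ i (by simp [Fin.le_def]; omega)) 2
    nlinarith [ht1 i, ht0 i]
  have e2 : (∑ i with ¬ (i : Fin r).1 < k, (σ i ^ 2 + c * (t i - 1)))
      = (∑ i with ¬ (i : Fin r).1 < k, σ i ^ 2)
        + c * (∑ i with ¬ (i : Fin r).1 < k, t i) - c * ((r : ℝ) - k) := by
    rw [Finset.sum_add_distrib]
    have : (∑ i with ¬ (i : Fin r).1 < k, c * (t i - 1))
        = c * (∑ i with ¬ (i : Fin r).1 < k, t i) - c * ((r : ℝ) - k) := by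
      rw [← Finset.mul_sum, Finset.sum_sub_distrib, Finset.sum_const, hcard]
      simp only [nsmul_eq_mul, mul_one]
      rw [Nat.cast_sub hkr.le]
      ring
    rw [this]; ring
  have e1 : (∑ i with (i : Fin r).1 < k, c * t i)
      = c * ∑ i with (i : Fin r).1 < k, t i := (Finset.mul_sum _ _ _).symm
  have htnn : 0 ≤ ∑ i with (i : Fin r).1 < k, t i :=
    Finset.sum_nonneg fun i _ => ht0 i
  nlinarith [h1, h2, e1, e2, hsplitσ, hsplitt, hts,
    mul_nonneg hcnn (sub_nonneg.mpr hts)]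

lemma tail_repr {n d r : ℕ} (U : Matrix (Fin n) (Fin r) ℝ) (V : Matrix (Fin d) (Fin r) ℝ)
    (σ : Fin r → ℝ) (j : ℕ) :
    U * Matrix.diagonal σ * Vᵀ - U * truncDiag σ j * Vᵀ
      = U * Matrix.diagonal (fun i : Fin r => if (i : ℕ) < j then 0 else σ i) * Vᵀ := by
  rw [truncDiag, ← Matrix.sub_mul, ← Matrix.mul_sub]
  have hd : Matrix.diagonal σ - Matrix.diagonal (fun i : Fin r => if (i : ℕ) < j then σ i else 0)
      = Matrix.diagonal (fun i : Fin r => if (i : ℕ) < j then 0 else σ i) := by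
    ext a b
    simp only [Matrix.sub_apply, Matrix.diagonal_apply]
    split_ifs <;> simp
  rw [hd]

lemma tail_frob {n d r : ℕ} (U : Matrix (Fin n) (Fin r) ℝ) (V : Matrix (Fin d) (Fin r) ℝ)
    (hU : Uᵀ * U = 1) (hV : Vᵀ * V = 1) (σ : Fin r → ℝ) (j : ℕ) :
    frobNorm (U * Matrix.diagonal σ * Vᵀ - U * truncDiag σ j * Vᵀ) ^ 2
      = ∑ i with ¬ (i : Fin r).1 < j, σ i ^ 2 := by
  rw [tail_repr, usv_frob U V hU hV, Finset.sum_filter]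
  apply Finset.sum_congr rfl
  intro i _
  by_cases h : (i : ℕ) < j <;> simp [h]

/-- ‖A_{m,⊥}‖_F² ≤ 2‖A_{k,⊥}‖_F² ≤ 2‖AX‖_F² for m with σ_m² ≥ λ ≥ σ_{m+1}². -/
theorem stmt_15 {n d r : ℕ} {k m : ℕ}
    (A : Matrix (Fin n) (Fin d) ℝ)
    (U : Matrix (Fin n) (Fin r) ℝ) (V : Matrix (Fin d) (Fin r) ℝ) (σ : Fin r → ℝ)
    (hU : Uᵀ * U = 1) (hV : Vᵀ * V = 1)
    (hσdec : ∀ i j : Fin r, i ≤ j → σ j ≤ σ i) (hσpos : ∀ i, 0 < σ i)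
    (hA : A = U * Matrix.diagonal σ * Vᵀ) (hrank : A.rank = r)
    (hk1 : 1 ≤ k) (hkr : k < r)
    (lam : ℝ) (hlam : lam = frobNorm (A - U * truncDiag σ k * Vᵀ) ^ 2 / k)
    (hm1 : 1 ≤ m) (hmr : m ≤ r)
    (hσm : lam ≤ σ ⟨m - 1, by omega⟩ ^ 2)
    (hσm1 : ∀ h : m < r, σ ⟨m, h⟩ ^ 2 ≤ lam) :
    frobNorm (A - U * truncDiag σ m * Vᵀ) ^ 2
        ≤ 2 * frobNorm (A - U * truncDiag σ k * Vᵀ) ^ 2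
      ∧ ∀ X : Matrix (Fin d) (Fin (d - k)) ℝ, Xᵀ * X = 1 →
        frobNorm (A - U * truncDiag σ m * Vᵀ) ^ 2 ≤ 2 * frobNorm (A * X) ^ 2 := by
  have hrd : r ≤ d := by
    have h := Matrix.rank_le_card_width A
    rw [hrank, Fintype.card_fin] at h
    exact h
  have hkd : k ≤ d := le_trans hkr.le hrd
  subst hA
  rw [tail_frob U V hU hV σ k] at hlam
  rw [tail_frob U V hU hV σ m, tail_frob U V hU hV σ k]
  have hpart1 := part1_sum σ hσdec hσpos hk1 hkr hm1 hmr lam hlam hσm1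
  refine ⟨hpart1, ?_⟩
  intro X hX
  have hSk : (∑ i with ¬ (i : Fin r).1 < k, σ i ^ 2)
      ≤ frobNorm (U * Matrix.diagonal σ * Vᵀ * X) ^ 2 := by
    rw [frob_AX U V X hU σ]
    apply final_sum hkr σ (fun i => ∑ j, (Vᵀ * X) i j ^ 2) hσdec hσpos
    · intro i
      exact Finset.sum_nonneg fun j _ => sq_nonneg _
    · intro i
      exact t_le_one V X hV hX i
    · have h := t_sum_ge V X hV hX
      have hc : ((d - k : ℕ) : ℝ) = (d : ℝ) - k := by
        rw [Nat.cast_sub hkd]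
      rw [hc] at h
      linarith
  linarith
end
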